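/- (Urysohn's Lemma for topometric spaces) Let X be a normal topometric space, F, G ⊆ X closed sets, and 0 < r < d(F,G). Then there exists a continuous 1-Lipschitz function f : X → [0,r] with f = 0 on F and f = r on G. -/

import Mathlib

open scoped ENNReal NNReal
open Set

structure TopometricOn (X : Type*) [TopologicalSpace X] where
  d : X → X → ℝ≥0∞
  d_self : ∀ x, d x x = 0
  eq_of_d_eq_zero : ∀ x y, d x y = 0 → x = y
  d_symm : ∀ x y, d x y = d y x
  d_triangle : ∀ x y z, d x z ≤ d x y + d y z
  lsc : LowerSemicontinuous fun p : X × X => d p.1 p.2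
  refines : ∀ U : Set X, IsOpen U → ∀ x ∈ U, ∃ ε > (0 : ℝ≥0∞), ∀ y, d x y < ε → y ∈ U

namespace TopometricOn

variable {X : Type*} [TopologicalSpace X]

noncomputable def setD (T : TopometricOn X) (F G : Set X) : ℝ≥0∞ :=
  ⨅ x ∈ F, ⨅ y ∈ G, T.d x y

noncomputable def ptD (T : TopometricOn X) (x : X) (F : Set X) : ℝ≥0∞ :=
  ⨅ y ∈ F, T.d x y

def IsNormal (T : TopometricOn X) : Prop :=
  (∀ F G : Set X, IsClosed F → IsClosed G → 0 < T.setD F G →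
      ∃ U V : Set X, IsOpen U ∧ IsOpen V ∧ F ⊆ U ∧ G ⊆ V ∧ Disjoint U V) ∧
  (∀ F : Set X, IsClosed F → ∀ r : ℝ≥0∞, 0 < r → IsClosed {x | T.ptD x F ≤ r})

end TopometricOn


/-!
Urysohn's construction, with `closure U_p ⊆ U_q` strengthened to the metric condition
`d(closure U_p, U_qᶜ) > (q - p) r`. Given finitely many such sets and a new level `q`, the strict
inequalities leave a uniform slack `ε`; thickening each `closure U_p` (`p < q`) by `(q - p) r + ε/4`
and each `U_{q'}ᶜ` (`q < q'`) by `(q' - q) r + ε/4` gives two closed sets at positive distance,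
and an open set `U_q` separating them satisfies the condition against all previous levels.
Inserting the rational levels one at a time, `f x = r · inf {p | x ∈ U_p}` is continuous as in
the classical proof, and the metric condition makes it `1`-Lipschitz.
-/

open Set Filter Topology

theorem exists_seq_of_forall_fin_exists {α : Type*} (P : ℕ → α → Prop)
    (R : ℕ → α → ℕ → α → Prop)
    (h : ∀ n (w : Fin n → α), (∀ i : Fin n, P i (w i)) →
      (∀ i j : Fin n, i < j → R i (w i) j (w j)) → ∃ a, P n a ∧ ∀ i : Fin n, R i (w i) n a) :
    ∃ u : ℕ → α, (∀ n, P n (u n)) ∧ ∀ m n, m < n → R m (u m) n (u n) := by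
  have : Nonempty α := let ⟨a, _⟩ := h 0 finZeroElim finZeroElim finZeroElim; ⟨a⟩
  choose! next hnext using h
  let u : ℕ → α := Nat.strongRec fun n u => next n fun i => u i i.isLt
  have hu (n : ℕ) : u n = next n fun i => u i := Nat.strongRec_eq _ _
  have key (n : ℕ) : P n (u n) ∧ ∀ m < n, R m (u m) n (u n) := by
    induction n using Nat.strong_induction_on with
    | _ n ih =>
      obtain ⟨hP, hR⟩ := hnext n (fun i => u i) (fun i => (ih i i.isLt).1)
        (fun i j hij => (ih j j.isLt).2 i hij)
      rw [← hu] at hP hR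
      exact ⟨hP, fun m hm => hR ⟨m, hm⟩⟩
  exact ⟨u, fun n => (key n).1, fun m n hmn => (key n).2 m hmn⟩

theorem exists_seq_dense_Ioo {c d : ℝ} (hcd : c < d) :
    ∃ q : ℕ → ℝ, (∀ n, q n ∈ Ioo c d) ∧ ∀ a b, c ≤ a → a < b → b ≤ d → ∃ n, q n ∈ Ioo a b := by
  have hS : (Ioo c d ∩ range ((↑) : ℚ → ℝ)).Countable :=
    (countable_range _).mono inter_subset_right
  obtain ⟨t, ht⟩ := exists_rat_btwn hcd
  obtain ⟨q, hq⟩ := hS.exists_eq_range ⟨t, ht, t, rfl⟩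
  refine ⟨q, fun n => (hq ▸ mem_range_self n : q n ∈ Ioo c d ∩ _).1, fun a b ha hab hb => ?_⟩
  obtain ⟨t, hat, htb⟩ := exists_rat_btwn hab
  obtain ⟨n, hn⟩ : (t : ℝ) ∈ range q := hq ▸ ⟨⟨ha.trans_lt hat, htb.trans_le hb⟩, t, rfl⟩
  exact ⟨n, hn ▸ ⟨hat, htb⟩⟩

section LevelInf

variable {ι X : Type*} {U : ι → Set X} {q : ι → ℝ} {x : X}

-- Inserting `1` makes the infimum over no level equal to `1` rather than the junk `sInf ∅ = 0`.
noncomputable def levelInf (U : ι → Set X) (q : ι → ℝ) (x : X) : ℝ :=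
  sInf (insert 1 (q '' {i | x ∈ U i}))

lemma levelInf_nonneg (hq : ∀ i, q i ∈ Icc (0 : ℝ) 1) : 0 ≤ levelInf U q x :=
  le_csInf (insert_nonempty _ _)
    (forall_mem_insert.2 ⟨zero_le_one, forall_mem_image.2 fun i _ => (hq i).1⟩)

lemma levelInf_le (hq : ∀ i, q i ∈ Icc (0 : ℝ) 1) {a : ℝ}
    (ha : a ∈ insert 1 (q '' {i | x ∈ U i})) : levelInf U q x ≤ a :=
  csInf_le ⟨0, forall_mem_insert.2 ⟨zero_le_one, forall_mem_image.2 fun i _ => (hq i).1⟩⟩ ha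

lemma levelInf_le_one (hq : ∀ i, q i ∈ Icc (0 : ℝ) 1) : levelInf U q x ≤ 1 :=
  levelInf_le hq (mem_insert _ _)

lemma levelInf_le_of_mem (hq : ∀ i, q i ∈ Icc (0 : ℝ) 1) {i : ι} (hx : x ∈ U i) :
    levelInf U q x ≤ q i :=
  levelInf_le hq (mem_insert_of_mem _ (mem_image_of_mem q hx))

lemma le_levelInf_of_notMem (hmono : ∀ i j, q i < q j → U i ⊆ U j) {i : ι} (hqi : q i ≤ 1)
    (hx : x ∉ U i) : q i ≤ levelInf U q x :=
  le_csInf (insert_nonempty _ _) <| forall_mem_insert.2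
    ⟨hqi, forall_mem_image.2 fun _ hj => not_lt.1 fun hji => hx (hmono _ _ hji hj)⟩

lemma exists_mem_lt_of_levelInf_lt {a : ℝ} (ha : levelInf U q x < a) (ha1 : a ≤ 1) :
    ∃ i, x ∈ U i ∧ q i < a := by
  obtain ⟨b, hb, hba⟩ := exists_lt_of_csInf_lt (insert_nonempty _ _) ha
  rcases hb with rfl | ⟨i, hi, rfl⟩
  · exact absurd ha1 hba.not_ge
  · exact ⟨i, hi, hba⟩

lemma levelInf_eq_zero (hq : ∀ i, q i ∈ Icc (0 : ℝ) 1)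
    (hdense : ∀ a b, 0 ≤ a → a < b → b ≤ 1 → ∃ i, q i ∈ Ioo a b) (hx : ∀ i, x ∈ U i) :
    levelInf U q x = 0 := by
  refine (levelInf_nonneg hq).antisymm' (not_lt.1 fun hpos => ?_)
  obtain ⟨i, -, hix⟩ := hdense 0 _ le_rfl hpos (levelInf_le_one hq)
  exact hix.not_ge (levelInf_le_of_mem hq (hx i))

lemma levelInf_eq_one (hx : ∀ i, x ∉ U i) : levelInf U q x = 1 := by
  simp [levelInf, hx]

lemma ofReal_levelInf_sub_mul_le (hq : ∀ i, q i ∈ Icc (0 : ℝ) 1)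
    (hdense : ∀ a b, 0 ≤ a → a < b → b ≤ 1 → ∃ i, q i ∈ Ioo a b) {r : ℝ} (hr : 0 ≤ r)
    {d : X → X → ℝ≥0∞}
    (hd : ∀ i j, q i < q j → ∀ x ∈ U i, ∀ y ∉ U j, ENNReal.ofReal ((q j - q i) * r) ≤ d x y)
    (x y : X) : ENNReal.ofReal ((levelInf U q y - levelInf U q x) * r) ≤ d x y := by
  set gx := levelInf U q x
  set gy := levelInf U q y
  rcases le_or_gt gy gx with hle | hlt
  · rw [ENNReal.ofReal_of_nonpos (mul_nonpos_of_nonpos_of_nonneg (sub_nonpos.2 hle) hr)]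
    exact zero_le
  have hbound : ∀ a b, gx < a → a < b → b < gy → ENNReal.ofReal ((b - a) * r) ≤ d x y := by
    intro a b hxa hab hby
    obtain ⟨i, hxi, hia⟩ :=
      exists_mem_lt_of_levelInf_lt hxa ((hab.trans hby).le.trans (levelInf_le_one hq))
    obtain ⟨j, hbj, hjy⟩ :=
      hdense b gy ((levelInf_nonneg hq).trans (hxa.trans hab).le) hby (levelInf_le_one hq)
    have hyj : y ∉ U j := fun hy => hjy.not_ge (levelInf_le_of_mem hq hy)
    calc ENNReal.ofReal ((b - a) * r) ≤ ENNReal.ofReal ((q j - q i) * r) := by gcongr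
      _ ≤ d x y := hd i j (by linarith) x hxi y hyj
  refine le_of_tendsto (f := fun t => ENNReal.ofReal ((gy - t - (gx + t)) * r)) (x := 𝓝[>] 0)
    (((ENNReal.continuous_ofReal.comp (by fun_prop)).tendsto' (0 : ℝ) _ (by simp)).mono_left
      nhdsWithin_le_nhds) ?_
  filter_upwards [Ioo_mem_nhdsGT (half_pos (sub_pos.2 hlt))] with t ht
  exact hbound _ _ (by linarith [ht.1]) (by linarith [ht.2]) (by linarith [ht.1])

lemma edist_mul_levelInf_le (hq : ∀ i, q i ∈ Icc (0 : ℝ) 1)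
    (hdense : ∀ a b, 0 ≤ a → a < b → b ≤ 1 → ∃ i, q i ∈ Ioo a b) {r : ℝ} (hr : 0 ≤ r)
    {d : X → X → ℝ≥0∞} (hd_symm : ∀ x y, d x y = d y x)
    (hd : ∀ i j, q i < q j → ∀ x ∈ U i, ∀ y ∉ U j, ENNReal.ofReal ((q j - q i) * r) ≤ d x y)
    (x y : X) : edist (r * levelInf U q x) (r * levelInf U q y) ≤ d x y := by
  have key x y := ofReal_levelInf_sub_mul_le hq hdense hr hd x y
  rw [edist_dist, Real.dist_eq, abs_eq_max_neg, ENNReal.ofReal_max, max_le_iff, neg_sub]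
  constructor
  · rw [hd_symm, ← mul_sub, mul_comm]; exact key y x
  · rw [← mul_sub, mul_comm]; exact key x y

variable [TopologicalSpace X]

lemma upperSemicontinuous_levelInf (hq : ∀ i, q i ∈ Icc (0 : ℝ) 1) (hU : ∀ i, IsOpen (U i)) :
    UpperSemicontinuous (levelInf U q) := by
  intro x a hxa
  rcases le_or_gt a 1 with ha1 | ha1
  · obtain ⟨i, hxi, hia⟩ := exists_mem_lt_of_levelInf_lt hxa ha1
    filter_upwards [(hU i).mem_nhds hxi] with y hy
    exact (levelInf_le_of_mem hq hy).trans_lt hia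
  · exact Eventually.of_forall fun y => (levelInf_le_one hq).trans_lt ha1

lemma lowerSemicontinuous_levelInf (hq : ∀ i, q i ∈ Icc (0 : ℝ) 1)
    (hdense : ∀ a b, 0 ≤ a → a < b → b ≤ 1 → ∃ i, q i ∈ Ioo a b)
    (hcl : ∀ i j, q i < q j → closure (U i) ⊆ U j) : LowerSemicontinuous (levelInf U q) := by
  have hmono i j (hij : q i < q j) : U i ⊆ U j := subset_closure.trans (hcl i j hij)
  intro x a hax
  rcases lt_or_ge a 0 with ha0 | ha0
  · exact Eventually.of_forall fun y => ha0.trans_le (levelInf_nonneg hq)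
  obtain ⟨i, hai, hix⟩ := hdense a _ ha0 hax (levelInf_le_one hq)
  obtain ⟨j, hij, hjx⟩ := hdense (q i) _ (hq i).1 hix (levelInf_le_one hq)
  have hxj : x ∉ U j := fun hx => hjx.not_ge (levelInf_le_of_mem hq hx)
  filter_upwards [isClosed_closure.isOpen_compl.mem_nhds fun hx => hxj (hcl i j hij hx)]
    with y hy
  exact hai.trans_le (le_levelInf_of_notMem hmono (hq i).2 fun h => hy (subset_closure h))

lemma continuous_levelInf (hq : ∀ i, q i ∈ Icc (0 : ℝ) 1)
    (hdense : ∀ a b, 0 ≤ a → a < b → b ≤ 1 → ∃ i, q i ∈ Ioo a b) (hU : ∀ i, IsOpen (U i))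
    (hcl : ∀ i j, q i < q j → closure (U i) ⊆ U j) : Continuous (levelInf U q) :=
  continuous_iff_lower_upperSemicontinuous.2
    ⟨lowerSemicontinuous_levelInf hq hdense hcl, upperSemicontinuous_levelInf hq hU⟩

end LevelInf

namespace TopometricOn

variable {X : Type*} [TopologicalSpace X] (T : TopometricOn X) {C D K L O : Set X} {x y : X}

lemma ptD_le (hy : y ∈ C) : T.ptD x C ≤ T.d x y :=
  iInf₂_le y hy

lemma setD_le (hx : x ∈ C) (hy : y ∈ D) : T.setD C D ≤ T.d x y :=
  (iInf₂_le x hx).trans (iInf₂_le y hy)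

lemma setD_comm (C D : Set X) : T.setD C D = T.setD D C :=
  le_antisymm
    (le_iInf₂ fun y hy => le_iInf₂ fun x hx => (T.setD_le hx hy).trans_eq (T.d_symm x y))
    (le_iInf₂ fun x hx => le_iInf₂ fun y hy => (T.setD_le hy hx).trans_eq (T.d_symm y x))

lemma setD_le_ptD_add_d_add_ptD (x y : X) :
    T.setD C D ≤ T.ptD x C + T.d x y + T.ptD y D := by
  simp only [ptD, ENNReal.iInf_add, ENNReal.add_iInf]
  refine le_iInf₂ fun e he => le_iInf₂ fun c hc => ?_
  calc T.setD C D ≤ T.d c e := T.setD_le hc he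
    _ ≤ T.d c x + (T.d x y + T.d y e) :=
      (T.d_triangle c x e).trans (add_le_add le_rfl (T.d_triangle x y e))
    _ = T.d x c + T.d x y + T.d y e := by rw [T.d_symm c x, add_assoc]

def thick (C : Set X) (ρ : ℝ≥0∞) : Set X :=
  {x | T.ptD x C ≤ ρ}

lemma isClosed_thick (hT : T.IsNormal) (hC : IsClosed C) {ρ : ℝ≥0∞} (hρ : 0 < ρ) :
    IsClosed (T.thick C ρ) :=
  hT.2 C hC ρ hρ

lemma lt_d_of_mem_thick {α β γ : ℝ≥0∞} (hα : α ≠ ⊤) (hβ : β ≠ ⊤) (hx : x ∈ T.thick C α)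
    (hy : y ∈ T.thick D β) (h : α + γ + β < T.setD C D) : γ < T.d x y := by
  have : α + γ + β < α + T.d x y + β :=
    h.trans_le ((T.setD_le_ptD_add_d_add_ptD x y).trans (by gcongr <;> assumption))
  exact (ENNReal.add_lt_add_iff_left hα).1 ((ENNReal.add_lt_add_iff_right hβ).1 this)

lemma le_setD_of_disjoint_thick {ρ : ℝ≥0∞} (h : Disjoint L (T.thick C ρ)) :
    ρ ≤ T.setD L C :=
  le_iInf₂ fun _ hy => le_iInf₂ fun _ hc =>
    (not_le.1 fun hyC => h.ne_of_mem hy hyC rfl).le.trans (T.ptD_le hc)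

-- The metric form of `closure U_p ⊆ U_q`, for `K = closure U_p` and `O = U_q`.
def LevelSeparated (r p : ℝ) (K : Set X) (q : ℝ) (O : Set X) : Prop :=
  p < q → ENNReal.ofReal ((q - p) * r) < T.setD K Oᶜ

variable {T} {r p q : ℝ}

lemma levelSeparated_self : T.LevelSeparated r p K p O :=
  fun h => (lt_irrefl p h).elim

lemma LevelSeparated.ofReal_le_d (h : T.LevelSeparated r p K q O) (hpq : p < q) (hx : x ∈ K)
    (hy : y ∉ O) : ENNReal.ofReal ((q - p) * r) ≤ T.d x y :=
  ((h hpq).trans_le (T.setD_le hx hy)).le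

lemma LevelSeparated.subset (h : T.LevelSeparated r p K q O) (hpq : p < q) : K ⊆ O :=
  fun x hx => by_contra fun hxO =>
    (h hpq).not_ge (((T.setD_le hx hxO).trans_eq (T.d_self x)).trans zero_le)

theorem exists_isOpen_levelSeparated (hT : T.IsNormal) (hr : 0 ≤ r) {ι : Type*} [Finite ι]
    {ℓ : ι → ℝ} {K O : ι → Set X} (hK : ∀ i, IsClosed (K i)) (hO : ∀ i, IsOpen (O i))
    (hsep : ∀ i j, T.LevelSeparated r (ℓ i) (K i) (ℓ j) (O j)) (q : ℝ) :
    ∃ W, IsOpen W ∧ ∀ i, T.LevelSeparated r (ℓ i) (K i) q W ∧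
      T.LevelSeparated r q (closure W) (ℓ i) (O i) := by
  obtain ⟨ε, hε, hslack⟩ : ∃ ε > 0, ∀ i j, ℓ i < ℓ j →
      ENNReal.ofReal ((ℓ j - ℓ i) * r + ε) < T.setD (K i) (O j)ᶜ := by
    refine Eventually.exists_gt ?_
    simp only [eventually_all]
    intro i j hij
    exact ((ENNReal.continuous_ofReal.comp (continuous_const.add continuous_id)).tendsto' 0 _
      (by simp)).eventually_lt_const (hsep i j hij)
  set α : ι → ℝ := fun i => (q - ℓ i) * r + ε / 4
  set β : ι → ℝ := fun j => (ℓ j - q) * r + ε / 4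
  have hα i (hi : ℓ i < q) : (q - ℓ i) * r < α i := by simp only [α]; linarith
  have hβ j (hj : q < ℓ j) : (ℓ j - q) * r < β j := by simp only [β]; linarith
  have hα₀ i (hi : ℓ i < q) : 0 ≤ (q - ℓ i) * r := mul_nonneg (sub_nonneg.2 hi.le) hr
  have hβ₀ j (hj : q < ℓ j) : 0 ≤ (ℓ j - q) * r := mul_nonneg (sub_nonneg.2 hj.le) hr
  set A := ⋃ i ∈ {i | ℓ i < q}, T.thick (K i) (ENNReal.ofReal (α i))
  set B := ⋃ j ∈ {j | q < ℓ j}, T.thick (O j)ᶜ (ENNReal.ofReal (β j))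
  have hA : IsClosed A := (toFinite _).isClosed_biUnion fun i hi =>
    T.isClosed_thick hT (hK i) (ENNReal.ofReal_pos.2 ((hα₀ i hi).trans_lt (hα i hi)))
  have hB : IsClosed B := (toFinite _).isClosed_biUnion fun j hj =>
    T.isClosed_thick hT (hO j).isClosed_compl (ENNReal.ofReal_pos.2 ((hβ₀ j hj).trans_lt (hβ j hj)))
  have hAB : 0 < T.setD A B := by
    refine (ENNReal.ofReal_pos.2 (half_pos hε)).trans_le
      (le_iInf₂ fun x hx => le_iInf₂ fun y hy => ?_)
    obtain ⟨i, hi, hx⟩ := mem_iUnion₂.1 hx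
    obtain ⟨j, hj, hy⟩ := mem_iUnion₂.1 hy
    refine (T.lt_d_of_mem_thick ENNReal.ofReal_ne_top ENNReal.ofReal_ne_top hx hy ?_).le
    have hαi := (hα₀ i hi).trans (hα i hi).le
    rw [← ENNReal.ofReal_add hαi (half_pos hε).le,
      ← ENNReal.ofReal_add (add_nonneg hαi (half_pos hε).le) ((hβ₀ j hj).trans (hβ j hj).le)]
    convert hslack i j (lt_trans hi hj) using 2
    simp only [α, β]
    ring
  obtain ⟨W, V, hW, hV, hAW, hBV, hWV⟩ := hT.1 A B hA hB hAB
  refine ⟨W, hW, fun i => ⟨fun hi => ?_, fun hi => ?_⟩⟩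
  · calc ENNReal.ofReal ((q - ℓ i) * r) < ENNReal.ofReal (α i) :=
          (ENNReal.ofReal_lt_ofReal_iff_of_nonneg (hα₀ i hi)).2 (hα i hi)
      _ ≤ T.setD Wᶜ (K i) := T.le_setD_of_disjoint_thick
          (disjoint_compl_left_iff_subset.2 ((subset_iUnion₂ (s := fun i (_ : ℓ i < q) =>
            T.thick (K i) (ENNReal.ofReal (α i))) i hi).trans hAW))
      _ = T.setD (K i) Wᶜ := T.setD_comm _ _
  · calc ENNReal.ofReal ((ℓ i - q) * r) < ENNReal.ofReal (β i) :=
          (ENNReal.ofReal_lt_ofReal_iff_of_nonneg (hβ₀ i hi)).2 (hβ i hi)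
      _ ≤ T.setD (closure W) (O i)ᶜ := T.le_setD_of_disjoint_thick
          ((hWV.closure_left hV).mono_right ((subset_iUnion₂ (s := fun j (_ : q < ℓ j) =>
            T.thick (O j)ᶜ (ENNReal.ofReal (β j))) i hi).trans hBV))

theorem exists_seq_levelSeparated (hT : T.IsNormal) (hr : 0 ≤ r) {ι : Type*} [Finite ι]
    {ℓ : ι → ℝ} {K O : ι → Set X} (hK : ∀ i, IsClosed (K i)) (hO : ∀ i, IsOpen (O i))
    (hsep : ∀ i j, T.LevelSeparated r (ℓ i) (K i) (ℓ j) (O j)) (q : ℕ → ℝ) :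
    ∃ U : ℕ → Set X, (∀ n, IsOpen (U n)) ∧
      (∀ n i, T.LevelSeparated r (ℓ i) (K i) (q n) (U n) ∧
        T.LevelSeparated r (q n) (closure (U n)) (ℓ i) (O i)) ∧
      ∀ m n, T.LevelSeparated r (q m) (closure (U m)) (q n) (U n) := by
  obtain ⟨U, hP, hR⟩ := exists_seq_of_forall_fin_exists
    (fun n W => IsOpen W ∧ ∀ i, T.LevelSeparated r (ℓ i) (K i) (q n) W ∧
      T.LevelSeparated r (q n) (closure W) (ℓ i) (O i))
    (fun m V n W => T.LevelSeparated r (q m) (closure V) (q n) W ∧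
      T.LevelSeparated r (q n) (closure W) (q m) V)
    fun n w hP hR => by
      have hsep' : ∀ s t : ι ⊕ Fin n, T.LevelSeparated r (Sum.elim ℓ (fun k => q k) s)
          (Sum.elim K (fun k => closure (w k)) s) (Sum.elim ℓ (fun k => q k) t)
          (Sum.elim O w t) := by
        rintro (i | k) (j | k')
        · exact hsep i j
        · exact ((hP k').2 i).1
        · exact ((hP k).2 j).2
        · rcases lt_trichotomy k k' with h | rfl | h
          exacts [(hR k k' h).1, levelSeparated_self, (hR k' k h).2]
      obtain ⟨W, hW, hWsep⟩ := exists_isOpen_levelSeparated hT hr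
        (Sum.forall.2 ⟨hK, fun _ => isClosed_closure⟩) (Sum.forall.2 ⟨hO, fun k => (hP k).1⟩)
        hsep' (q n)
      exact ⟨W, ⟨hW, fun i => hWsep (.inl i)⟩, fun k => hWsep (.inr k)⟩
  refine ⟨U, fun n => (hP n).1, fun n => (hP n).2, fun m n => ?_⟩
  rcases lt_trichotomy m n with h | rfl | h
  exacts [(hR m n h).1, levelSeparated_self, (hR n m h).2]

end TopometricOn

open TopometricOn

/-- Urysohn's Lemma for normal topometric spaces. -/
theorem topometric_urysohn {X : Type*} [TopologicalSpace X]
    (T : TopometricOn X) (hT : T.IsNormal) (F G : Set X)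
    (hF : IsClosed F) (hG : IsClosed G) (r : ℝ) (hr : 0 < r)
    (hrd : ENNReal.ofReal r < T.setD F G) :
    ∃ f : X → ℝ, Continuous f ∧ (∀ x y, edist (f x) (f y) ≤ T.d x y) ∧
      (∀ x, f x ∈ Set.Icc (0 : ℝ) r) ∧ (∀ x ∈ F, f x = 0) ∧ (∀ x ∈ G, f x = r) := by
  obtain ⟨q, hq, hdense⟩ := exists_seq_dense_Ioo zero_lt_one
  have hq' n : q n ∈ Icc 0 1 := Ioo_subset_Icc_self (hq n)
  -- `F` plays `closure U₀` and `Gᶜ` plays `U₁`; the two `univ` entries are never constrained.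
  obtain ⟨U, hU, hUFG, hUU⟩ := exists_seq_levelSeparated hT hr.le (ℓ := ![0, 1])
    (K := ![F, univ]) (O := ![univ, Gᶜ]) (by simp [Fin.forall_fin_two, hF])
    (by simp [Fin.forall_fin_two, hG]) (by simpa [Fin.forall_fin_two, LevelSeparated] using hrd) q
  have hFU n : F ⊆ U n := by simpa using (hUFG n 0).1.subset (by simpa using (hq n).1)
  have hUG n : closure (U n) ⊆ Gᶜ := by simpa using (hUFG n 1).2.subset (by simpa using (hq n).2)
  refine ⟨fun x => r * levelInf U q x,
    continuous_const.mul (continuous_levelInf hq' hdense hU fun m n h => (hUU m n).subset h),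
    edist_mul_levelInf_le hq' hdense hr.le T.d_symm fun m n h x hx y hy =>
      (hUU m n).ofReal_le_d h (subset_closure hx) hy,
    fun x => ⟨mul_nonneg hr.le (levelInf_nonneg hq'), mul_le_of_le_one_right hr.le
      (levelInf_le_one hq')⟩,
    fun x hx => ?_, fun x hx => ?_⟩
  · simp [levelInf_eq_zero hq' hdense fun n => hFU n hx]
  · simp [levelInf_eq_one fun n hxn => hUG n (subset_closure hxn) hx]
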